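/- arXiv:2209.13043 — 3 statements merged into one kernel-verified Lean document; each statement's English description precedes it below -/
import Mathlib

section
/- Let S be a finite type and let μ be a probability mass function on sequences W : ℕ → S ("worlds" over instants). Assume that every world W in the support of μ is constant from instant 1 onward, i.e. W (I+1) = W I for every instant I ≥ 1. Let φ be a predicate on worlds that depends only on instants ≥ 1, i.e. whenever two worlds W and W' satisfy W I = W' I for all I ≥ 1, then φ W holds if and only if φ W' holds. Then the μ-probability of the event {W | φ W} equals the sum, over all states s ∈ S such that φ holds of the constant world (fun _ => s), of the μ-probability of the event {W | W 1 = s}. (This is the content of the paper's Proposition: a domain description whose entire narrative occurs at instant 0 agrees, on every query mentioning only instants > 0, with the progressed domain description obtained by recompiling the state distribution at instant 1 into a new initial condition.) -/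
open scoped Classical

/-- Progression correctness (paper's Proposition, abstract probabilistic core):
if every world in the support of `μ` is constant from instant 1 onward, and `φ`
depends only on instants ≥ 1, then the probability of `φ` equals the sum over
states `s` with `φ (fun _ => s)` of the probability that the world is in state
`s` at instant 1. -/
theorem progression_correct {S : Type*} [Fintype S] (μ : PMF (ℕ → S))
    (hconst : ∀ W ∈ μ.support, ∀ I : ℕ, 1 ≤ I → W (I + 1) = W I)
    (φ : (ℕ → S) → Prop)
    (hφ : ∀ W W' : ℕ → S, (∀ I : ℕ, 1 ≤ I → W I = W' I) → (φ W ↔ φ W')) :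
    μ.toOuterMeasure {W | φ W} =
      ∑ s : S, if φ (fun _ => s) then μ.toOuterMeasure {W | W 1 = s} else 0 := by
  have key : ∀ W ∈ μ.support, φ W ↔ φ (fun _ => W 1) := by
    intro W hW
    refine hφ W (fun _ => W 1) ?_
    intro I hI
    induction I with
    | zero => omega
    | succ n ih =>
      rcases Nat.eq_or_lt_of_le hI with h | h
      · simp [← h]
      · rw [hconst W hW n (by omega), ih (by omega)]
  rw [PMF.toOuterMeasure_apply]
  have : ∀ s : S, (if φ (fun _ => s) then μ.toOuterMeasure {W | W 1 = s} else 0)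
      = ∑' W : ℕ → S, if φ (fun _ => s) then Set.indicator {W | W 1 = s} μ W else 0 := by
    intro s
    by_cases h : φ (fun _ => s) <;> simp [h, PMF.toOuterMeasure_apply]
  simp_rw [this]
  rw [← Summable.tsum_finsetSum (fun _ _ => ENNReal.summable)]
  congr 1
  funext W
  by_cases hW : W ∈ μ.support
  · rw [Finset.sum_eq_single (W 1)]
    · by_cases h : φ W
      · have h' : φ (fun _ => W 1) := (key W hW).mp h
        simp [h', Set.indicator, h]
      · have h' : ¬ φ (fun _ => W 1) := fun hc => h ((key W hW).mpr hc)
        simp [h', Set.indicator, h]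
    · intro s _ hs
      by_cases h : φ (fun _ => s) <;> simp [h, Set.indicator, Ne.symm hs]
    · simp
  · have hz : μ W = 0 := by simpa [PMF.mem_support_iff] using hW
    simp [Set.indicator, hz]
end

section
/- Let p, a, b be real numbers with 0 ≤ p ≤ 1, 0 ≤ b ≤ a ≤ 1, and p·(a−b) + b > 0. Set q = p·(a−b) / (p·(a−b) + b). Then q + (1−q)·p = p·a / (p·a + (1−p)·b). In words: replacing a positive reading of an imperfect sensor by an event that occurs with probability q and makes the sensed fluent true with certainty yields exactly the Bayesian posterior probability of the fluent given the positive reading. -/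
/-- Translating a positive sensor reading into an occurrence event: the PEC
update `q + (1-q)·p` with `q = p·(a-b)/(p·(a-b)+b)` equals the Bayesian
posterior `p·a/(p·a+(1-p)·b)`. -/
theorem positive_reading_translation (p a b : ℝ)
    (hp0 : 0 ≤ p) (hp1 : p ≤ 1) (hb0 : 0 ≤ b) (hba : b ≤ a) (ha1 : a ≤ 1)
    (hpos : 0 < p * (a - b) + b) :
    (p * (a - b) / (p * (a - b) + b)) +
      (1 - p * (a - b) / (p * (a - b) + b)) * p =
    p * a / (p * a + (1 - p) * b) := by
  have h : p * a + (1 - p) * b = p * (a - b) + b := by ring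
  rw [h]
  field_simp
  ring
end

section
/- Let p, a, b be real numbers with 0 ≤ p ≤ 1, 0 ≤ b ≤ a ≤ 1, and p·(1−a) + (1−p)·(1−b) > 0. Set q = (p−1)·(a−b) / (p·(a−b) + b − 1). Then (1−q)·p = p·(1−a) / (p·(1−a) + (1−p)·(1−b)). In words: replacing a negative reading of an imperfect sensor by an event that occurs with probability q and makes the sensed fluent false with certainty yields exactly the Bayesian posterior probability of the fluent given the negative reading. (Note p·(a−b)+b−1 = −(p·(1−a)+(1−p)·(1−b)) ≠ 0, so q is well defined.) -/
/-- Translating a negative sensor reading into an occurrence event: the PEC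
update `(1-q)·p` with `q = (p-1)·(a-b)/(p·(a-b)+b-1)` equals the Bayesian
posterior `p·(1-a)/(p·(1-a)+(1-p)·(1-b))`. -/
theorem negative_reading_translation (p a b : ℝ)
    (hp0 : 0 ≤ p) (hp1 : p ≤ 1) (hb0 : 0 ≤ b) (hba : b ≤ a) (ha1 : a ≤ 1)
    (hpos : 0 < p * (1 - a) + (1 - p) * (1 - b)) :
    (1 - (p - 1) * (a - b) / (p * (a - b) + b - 1)) * p =
      p * (1 - a) / (p * (1 - a) + (1 - p) * (1 - b)) := by
  have h1 : p * (a - b) + b - 1 ≠ 0 := by nlinarith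
  have h2 : p * (1 - a) + (1 - p) * (1 - b) ≠ 0 := ne_of_gt hpos
  field_simp
  ring
end
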